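/- Let H₁, H₂ be separable Hilbert spaces, let S₁ ⊆ B(H₁) and S₂ ⊆ B(H₂) be commutative lattices of projections (not necessarily complete) containing the zero and the identity projections, and let θ : S₁ → S₂ be a lattice isomorphism. Then θ extends to a * isomorphism ρ from the norm-closed linear span of S₁ onto the norm-closed linear span of S₂. -/

import Mathlib

noncomputable section

open ContinuousLinearMap

universe u v w

section OperatorDefs

variable {H : Type u} {K : Type v} {L : Type w}
variable [NormedAddCommGroup H] [InnerProductSpace ℂ H] [CompleteSpace H]
variable [NormedAddCommGroup K] [InnerProductSpace ℂ K] [CompleteSpace K]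
variable [NormedAddCommGroup L] [InnerProductSpace ℂ L] [CompleteSpace L]

/-- The set of all products (compositions) `a ∘ b` with `a ∈ M`, `b ∈ N`. -/
def mulSet (M : Set (K →L[ℂ] L)) (N : Set (H →L[ℂ] K)) : Set (H →L[ℂ] L) :=
  Set.image2 (fun a b => a.comp b) M N

/-- The set `M* = {T* : T ∈ M}` of adjoints of members of `M`. -/
def adjSet (M : Set (H →L[ℂ] K)) : Set (K →L[ℂ] H) :=
  (fun T => ContinuousLinearMap.adjoint T) '' M

/-- A subset of a complex vector space is a linear subspace. -/
def IsLinSubspace {V : Type*} [AddCommGroup V] [Module ℂ V] (S : Set V) : Prop :=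
  ∃ p : Submodule ℂ V, S = ↑p

/-- The σ-weak (ultraweak, w*) topology on `B(H,K)`: the initial topology induced by the
functionals `T ↦ ∑ₙ ⟪yₙ, T xₙ⟫` for square-summable sequences `(xₙ)`, `(yₙ)`. -/
def sigmaWeak (H : Type u) (K : Type v) [NormedAddCommGroup H] [InnerProductSpace ℂ H]
    [NormedAddCommGroup K] [InnerProductSpace ℂ K] : TopologicalSpace (H →L[ℂ] K) :=
  ⨅ (x : ℕ → H) (y : ℕ → K) (_ : Summable fun n => ‖x n‖ ^ 2)
    (_ : Summable fun n => ‖y n‖ ^ 2),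
    TopologicalSpace.induced (fun T => ∑' n, (inner ℂ (y n) (T (x n)) : ℂ)) inferInstance

/-- `S` is closed in the w* (σ-weak) topology. -/
def IsWStarClosed (S : Set (H →L[ℂ] K)) : Prop := @IsClosed _ (sigmaWeak H K) S

/-- The w*-closed linear span of a set of operators. -/
def wspan (S : Set (H →L[ℂ] K)) : Set (H →L[ℂ] K) :=
  @closure _ (sigmaWeak H K) ((Submodule.span ℂ S : Submodule ℂ (H →L[ℂ] K)) : Set (H →L[ℂ] K))

/-- A ternary ring of operators: a linear subspace `M` with `M M* M ⊆ M`. -/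
def IsTRO (M : Set (H →L[ℂ] K)) : Prop :=
  IsLinSubspace M ∧ mulSet (mulSet M (adjSet M)) M ⊆ M

/-- The orthogonal projection (as an operator on `K`) onto the closed linear span of `S`. -/
def projOntoClosure (S : Set K) : K →L[ℂ] K :=
  haveI : CompleteSpace ((Submodule.span ℂ S).topologicalClosure) :=
    (Submodule.isClosed_topologicalClosure _).completeSpace_coe
  ((Submodule.span ℂ S).topologicalClosure).subtypeL.comp
    (((Submodule.span ℂ S).topologicalClosure).orthogonalProjectionOnto)

/-- `Map(U)` : sends a projection `P` on `H` to the projection onto the closed linear span of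
`{T P ξ : T ∈ U, ξ ∈ H}`. -/
def opMap (U : Set (H →L[ℂ] K)) (P : H →L[ℂ] H) : K →L[ℂ] K :=
  projOntoClosure {y : K | ∃ T ∈ U, ∃ ξ : H, T (P ξ) = y}

/-- `U` is essential: `Map(U)(I) = I` and `Map(U*)(I) = I`. -/
def IsEssential (U : Set (H →L[ℂ] K)) : Prop :=
  opMap U 1 = 1 ∧ opMap (adjSet U) 1 = 1

/-- The commutant of a set of operators. -/
def commutantS (S : Set (H →L[ℂ] H)) : Set (H →L[ℂ] H) :=
  {T | ∀ s ∈ S, s * T = T * s}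

/-- An (orthogonal) projection. -/
def IsProjOp (P : H →L[ℂ] H) : Prop := P * P = P ∧ star P = P

/-- The natural order on projections: `P ≤ Q` iff `P Q = P`. -/
def projLE (P Q : H →L[ℂ] H) : Prop := P * Q = P

/-- The invariant projection lattice of an algebra: `Lat(A) = {L : L⊥ A L = 0}`. -/
def LatSet (A : Set (H →L[ℂ] H)) : Set (H →L[ℂ] H) :=
  {P | IsProjOp P ∧ ∀ T ∈ A, (1 - P) * (T * P) = 0}

/-- `Alg(S) = {T : L⊥ T L = 0 for all L ∈ S}`. -/
def AlgSet (S : Set (H →L[ℂ] H)) : Set (H →L[ℂ] H) :=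
  {T | ∀ P ∈ S, (1 - P) * (T * P) = 0}

/-- The reflexive hull of a space of operators. -/
def RefHull (U : Set (H →L[ℂ] K)) : Set (H →L[ℂ] K) :=
  {T | ∀ ξ : H, T ξ ∈
    closure ((Submodule.span ℂ ((fun S : H →L[ℂ] K => S ξ) '' U) : Submodule ℂ K) : Set K)}

/-- The diagonal `Δ(A) = A ∩ A*` of an algebra. -/
def diagSet (A : Set (H →L[ℂ] H)) : Set (H →L[ℂ] H) := A ∩ (star '' A)

/-- A w*-closed (not necessarily unital, not necessarily selfadjoint) operator algebra. -/
def IsWStarClosedAlgebra (A : Set (H →L[ℂ] H)) : Prop :=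
  IsLinSubspace A ∧ (∀ a ∈ A, ∀ b ∈ A, a * b ∈ A) ∧ IsWStarClosed A

/-- `A ∼_M B` : TRO equivalence via the TRO `M`. -/
def TROEquivalentVia (A : Set (H →L[ℂ] H)) (B : Set (K →L[ℂ] K))
    (M : Set (H →L[ℂ] K)) : Prop :=
  IsTRO M ∧ A = wspan (mulSet (mulSet (adjSet M) B) M) ∧
    B = wspan (mulSet (mulSet M A) (adjSet M))

/-- TRO equivalence of two algebras. -/
def TROEquivalent (A : Set (H →L[ℂ] H)) (B : Set (K →L[ℂ] K)) : Prop :=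
  ∃ M : Set (H →L[ℂ] K), TROEquivalentVia A B M

/-- `θ` restricts to a * isomorphism of `C` onto `E`. -/
def IsStarIsomOn (θ : (H →L[ℂ] H) → (K →L[ℂ] K)) (C : Set (H →L[ℂ] H))
    (E : Set (K →L[ℂ] K)) : Prop :=
  Set.BijOn θ C E ∧ (∀ a ∈ C, ∀ b ∈ C, θ (a + b) = θ a + θ b) ∧
    (∀ (c : ℂ), ∀ a ∈ C, θ (c • a) = c • θ a) ∧
    (∀ a ∈ C, ∀ b ∈ C, θ (a * b) = θ a * θ b) ∧
    (∀ a ∈ C, θ (star a) = star (θ a))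

/-- `φ` restricts to a lattice isomorphism (order preserving bijection) of `S₁` onto `S₂`. -/
def IsLatticeIsomOn (φ : (H →L[ℂ] H) → (K →L[ℂ] K)) (S₁ : Set (H →L[ℂ] H))
    (S₂ : Set (K →L[ℂ] K)) : Prop :=
  Set.BijOn φ S₁ S₂ ∧ ∀ P ∈ S₁, ∀ Q ∈ S₁, (projLE P Q ↔ projLE (φ P) (φ Q))

/-- The supremum of a family of projections: projection onto the closed span of the ranges. -/
def latSup (F : Set (H →L[ℂ] H)) : H →L[ℂ] H :=
  projOntoClosure (⋃ P ∈ F, Set.range P)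

/-- The infimum of a family of projections: projection onto the intersection of the ranges. -/
def latInf (F : Set (H →L[ℂ] H)) : H →L[ℂ] H :=
  projOntoClosure (⋂ P ∈ F, Set.range P)

/-- A commutative subspace lattice: commuting projections, `0, 1 ∈ S`, closed under
arbitrary suprema and infima. -/
def IsCSL (S : Set (H →L[ℂ] H)) : Prop :=
  (∀ P ∈ S, IsProjOp P) ∧ (∀ P ∈ S, ∀ Q ∈ S, P * Q = Q * P) ∧
    (0 : H →L[ℂ] H) ∈ S ∧ (1 : H →L[ℂ] H) ∈ S ∧
    ∀ F ⊆ S, latSup F ∈ S ∧ latInf F ∈ S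

/-- `L♭ = ⋁ {M ∈ S : M < L}`. -/
def latFlat (S : Set (H →L[ℂ] H)) (P : H →L[ℂ] H) : H →L[ℂ] H :=
  latSup {M | M ∈ S ∧ projLE M P ∧ M ≠ P}

/-- An atom of the lattice `S` : a (nonzero) difference `L - L♭`. -/
def IsAtomOf (S : Set (H →L[ℂ] H)) (A : H →L[ℂ] H) : Prop :=
  ∃ P ∈ S, latFlat S P ≠ P ∧ A = P - latFlat S P

/-- The sum (supremum) of the atoms of `S`. -/
def atomSum (S : Set (H →L[ℂ] H)) : H →L[ℂ] H :=
  latSup {A | IsAtomOf S A}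

/-- A spatial Morita context `(A, B, U, V)`. -/
def IsSpatialMoritaContext (A : Set (H →L[ℂ] H)) (B : Set (K →L[ℂ] K))
    (U : Set (H →L[ℂ] K)) (V : Set (K →L[ℂ] H)) : Prop :=
  IsLinSubspace U ∧ IsLinSubspace V ∧
    mulSet (mulSet B U) A ⊆ U ∧ mulSet (mulSet A V) B ⊆ V ∧
    A = wspan (mulSet V U) ∧ B = wspan (mulSet U V)

/-- Spatial Morita equivalence. -/
def SpatiallyMoritaEquivalent (A : Set (H →L[ℂ] H)) (B : Set (K →L[ℂ] K)) : Prop :=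
  ∃ (U : Set (H →L[ℂ] K)) (V : Set (K →L[ℂ] H)), IsSpatialMoritaContext A B U V

/-- A maximal abelian selfadjoint algebra: `D = D* = D′`. -/
def IsMasa (D : Set (H →L[ℂ] H)) : Prop :=
  (∀ a ∈ D, star a ∈ D) ∧ commutantS D = D

/-- A reflexive masa bimodule `W` (over the masas `D₂`, `D₁`) is synthetic iff `W_min = W`,
equivalently `W` is contained in every w*-closed `D₂,D₁`-bimodule whose reflexive hull is `W`. -/
def IsSyntheticWrt (D₂ : Set (K →L[ℂ] K)) (D₁ : Set (H →L[ℂ] H))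
    (W : Set (H →L[ℂ] K)) : Prop :=
  ∀ V : Set (H →L[ℂ] K), IsLinSubspace V → IsWStarClosed V →
    mulSet (mulSet D₂ V) D₁ ⊆ V → RefHull V = W → W ⊆ V

/-- The weak operator topology on `B(H,K)`. -/
def wot (H : Type u) (K : Type v) [NormedAddCommGroup H] [InnerProductSpace ℂ H]
    [NormedAddCommGroup K] [InnerProductSpace ℂ K] : TopologicalSpace (H →L[ℂ] K) :=
  ⨅ (x : H) (y : K), TopologicalSpace.induced (fun T => (inner ℂ y (T x) : ℂ)) inferInstance

/-- A von Neumann algebra: a unital selfadjoint subalgebra of `B(H)`, closed in the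
weak operator topology. -/
def IsVonNeumannAlgebra (A : Set (H →L[ℂ] H)) : Prop :=
  IsLinSubspace A ∧ (∀ a ∈ A, ∀ b ∈ A, a * b ∈ A) ∧ (∀ a ∈ A, star a ∈ A) ∧
    (1 : H →L[ℂ] H) ∈ A ∧ @IsClosed _ (wot H H) A

/-- The direct sum `X ⊕ Y` of two operators, acting on the Hilbert space direct sum. -/
def dsum (X : H →L[ℂ] H) (Y : K →L[ℂ] K) :
    WithLp 2 (H × K) →L[ℂ] WithLp 2 (H × K) :=
  (((WithLp.prodContinuousLinearEquiv 2 ℂ H K).symm :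
      (H × K) →L[ℂ] WithLp 2 (H × K)).comp (X.prodMap Y)).comp
    ((WithLp.prodContinuousLinearEquiv 2 ℂ H K) : WithLp 2 (H × K) →L[ℂ] (H × K))

end OperatorDefs

-- ## Auxiliary development
section Atoms
variable {E : Type*} [NormedAddCommGroup E] [InnerProductSpace ℂ E] [CompleteSpace E]

lemma isProjOp_one : IsProjOp (1 : E →L[ℂ] E) := ⟨one_mul 1, star_one _⟩

lemma IsProjOp.compl {P : E →L[ℂ] E} (h : IsProjOp P) : IsProjOp (1 - P) := by
  constructor
  · rw [mul_sub, sub_mul, sub_mul, one_mul, mul_one, h.1]; abel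
  · rw [star_sub, star_one, h.2]

lemma IsProjOp.mul {P Q : E →L[ℂ] E} (hP : IsProjOp P) (hQ : IsProjOp Q)
    (hc : P * Q = Q * P) : IsProjOp (P * Q) := by
  constructor
  · calc P * Q * (P * Q) = P * (Q * P) * Q := by noncomm_ring
    _ = P * (P * Q) * Q := by rw [hc]
    _ = (P * P) * (Q * Q) := by noncomm_ring
    _ = P * Q := by rw [hP.1, hQ.1]
  · rw [star_mul, hP.2, hQ.2, hc]

lemma IsProjOp.norm_le_one {P : E →L[ℂ] E} (h : IsProjOp P) : ‖P‖ ≤ 1 := by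
  have h1 : ‖star P * P‖ = ‖P‖ * ‖P‖ := CStarRing.norm_star_mul_self
  rw [h.2, h.1] at h1
  nlinarith [norm_nonneg P]

lemma IsProjOp.apply_norm_le {P : E →L[ℂ] E} (h : IsProjOp P) (x : E) : ‖P x‖ ≤ ‖x‖ := by
  calc ‖P x‖ ≤ ‖P‖ * ‖x‖ := P.le_opNorm x
  _ ≤ 1 * ‖x‖ := mul_le_mul_of_nonneg_right h.norm_le_one (norm_nonneg x)
  _ = ‖x‖ := one_mul _

lemma pyth {ι : Type*} (s : Finset ι) (v : ι → E)
    (h : ∀ i ∈ s, ∀ j ∈ s, i ≠ j → (inner ℂ (v i) (v j) : ℂ) = 0) :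
    ‖∑ i ∈ s, v i‖ ^ 2 = ∑ i ∈ s, ‖v i‖ ^ 2 := by
  have : (RCLike.re (inner ℂ (∑ i ∈ s, v i) (∑ i ∈ s, v i) : ℂ)) = ∑ i ∈ s, ‖v i‖ ^ 2 := by
    rw [sum_inner]
    rw [map_sum]
    refine Finset.sum_congr rfl fun i hi => ?_
    rw [inner_sum]
    rw [Finset.sum_eq_single i (fun j hj hne => h i hi j hj (Ne.symm hne)) (fun hi' => absurd hi hi')]
    exact inner_self_eq_norm_sq _
  rw [← this, inner_self_eq_norm_sq]

/-- The atom of a family of projections with sign pattern ε. -/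
def atomF : {n : ℕ} → (Fin n → (E →L[ℂ] E)) → (Fin n → Bool) → (E →L[ℂ] E)
  | 0, _, _ => 1
  | (_ + 1), p, ε =>
    (if ε 0 then p 0 else 1 - p 0) * atomF (fun i => p i.succ) (fun i => ε i.succ)

lemma atomF_succ {n : ℕ} (p : Fin (n+1) → (E →L[ℂ] E)) (ε : Fin (n+1) → Bool) :
    atomF p ε = (if ε 0 then p 0 else 1 - p 0) *
      atomF (fun i => p i.succ) (fun i => ε i.succ) := rfl

lemma commute_atomF {n : ℕ} {p : Fin n → (E →L[ℂ] E)} {T : E →L[ℂ] E}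
    (h : ∀ i, Commute T (p i)) (ε : Fin n → Bool) : Commute T (atomF p ε) := by
  induction n with
  | zero => exact Commute.one_right T
  | succ n ih =>
    rw [atomF_succ]
    refine Commute.mul_right ?_ (ih (fun i => h i.succ) _)
    by_cases hε : ε 0
    · simpa [hε] using h 0
    · simp only [hε, if_false]
      exact (Commute.one_right T).sub_right (h 0)

lemma atomF_proj {n : ℕ} {p : Fin n → (E →L[ℂ] E)} (hp : ∀ i, IsProjOp (p i))
    (hc : ∀ i j, Commute (p i) (p j)) (ε : Fin n → Bool) : IsProjOp (atomF p ε) := by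
  induction n with
  | zero => exact isProjOp_one
  | succ n ih =>
    rw [atomF_succ]
    have h0 : IsProjOp (if ε 0 then p 0 else 1 - p 0) := by
      by_cases hε : ε 0
      · simpa [hε] using hp 0
      · simpa [hε] using (hp 0).compl
    refine h0.mul (ih (fun i => hp i.succ) (fun i j => hc i.succ j.succ) _) ?_
    have : Commute (if ε 0 then p 0 else 1 - p 0)
        (atomF (fun i => p i.succ) (fun i => ε i.succ)) := by
      refine commute_atomF (fun i => ?_) _
      by_cases hε : ε 0
      · simpa [hε] using hc 0 i.succ
      · simp only [hε, if_false]
        exact Commute.sub_left (Commute.one_left _) (hc 0 i.succ)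
    exact this.eq

end Atoms

section Atoms2
variable {E : Type*} [NormedAddCommGroup E] [InnerProductSpace ℂ E] [CompleteSpace E]

lemma mul_mul_mul_comm'' {R : Type*} [Ring R] (a b c d : R) (h : b * c = c * b) :
    (a * b) * (c * d) = (a * c) * (b * d) := by
  rw [mul_assoc, ← mul_assoc b, h, mul_assoc, ← mul_assoc]

lemma sum_pi_succ {n : ℕ} {M : Type*} [AddCommMonoid M] (f : (Fin (n+1) → Bool) → M) :
    ∑ ε : Fin (n+1) → Bool, f ε
      = ∑ b : Bool, ∑ ε : Fin n → Bool, f (Fin.cons b ε) := by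
  calc ∑ ε : Fin (n+1) → Bool, f ε
      = ∑ q : Bool × (Fin n → Bool), f (Fin.cons q.1 q.2) :=
        Fintype.sum_equiv (Fin.consEquiv (fun _ => Bool)).symm _ _
          (fun ε => by simp [Fin.consEquiv, Fin.cons_self_tail])
    _ = ∑ b : Bool, ∑ ε : Fin n → Bool, f (Fin.cons b ε) :=
        Fintype.sum_prod_type (f := fun q : Bool × (Fin n → Bool) => f (Fin.cons q.1 q.2))

lemma atomF_cons {n : ℕ} (p : Fin (n+1) → (E →L[ℂ] E)) (b : Bool) (ε : Fin n → Bool) :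
    atomF p (Fin.cons b ε)
      = (if b then p 0 else 1 - p 0) * atomF (fun i => p i.succ) ε := by
  rw [atomF_succ]
  simp [Fin.cons_zero, Fin.cons_succ]

lemma atomF_sum {n : ℕ} (p : Fin n → (E →L[ℂ] E)) :
    ∑ ε : Fin n → Bool, atomF p ε = 1 := by
  induction n with
  | zero => rw [Fintype.sum_unique]; rfl
  | succ n ih =>
    rw [sum_pi_succ (fun ε => atomF p ε)]
    have : ∀ b : Bool, ∑ ε : Fin n → Bool, atomF p (Fin.cons b ε)
        = (if b then p 0 else 1 - p 0) := by
      intro b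
      simp only [atomF_cons]
      rw [← Finset.mul_sum, ih (fun i => p i.succ), mul_one]
    rw [Fintype.sum_bool, this true, this false]
    simp only [if_true, if_false]
    rw [add_comm]
    exact sub_add_cancel _ _

lemma atomF_mul_left {n : ℕ} {p : Fin n → (E →L[ℂ] E)} (hp : ∀ i, IsProjOp (p i))
    (hc : ∀ i j, Commute (p i) (p j)) (i : Fin n) (ε : Fin n → Bool) :
    p i * atomF p ε = if ε i then atomF p ε else 0 := by
  induction n with
  | zero => exact absurd i.2 (Nat.not_lt_zero _)
  | succ n ih =>
    rw [atomF_succ]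
    induction i using Fin.cases with
    | zero =>
      rw [← mul_assoc]
      by_cases hε : ε 0
      · simp only [hε, if_true, (hp 0).1]
      · have h2 : p 0 * (1 - p 0) = 0 := by
          rw [mul_sub, mul_one, (hp 0).1, sub_self]
        simp [hε, h2]
    | succ j =>
      have hcom : p j.succ * (if ε 0 then p 0 else 1 - p 0)
          = (if ε 0 then p 0 else 1 - p 0) * p j.succ := by
        by_cases hε : ε 0
        · simpa [hε] using (hc j.succ 0).eq
        · simp only [hε, if_false]
          exact (Commute.sub_right (Commute.one_right _) (hc j.succ 0)).eq
      rw [← mul_assoc, hcom, mul_assoc,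
        ih (fun k => hp k.succ) (fun k l => hc k.succ l.succ) j]
      by_cases hε : ε j.succ
      · simp [hε]
      · simp [hε]

lemma atomF_orth {n : ℕ} {p : Fin n → (E →L[ℂ] E)} (hp : ∀ i, IsProjOp (p i))
    (hc : ∀ i j, Commute (p i) (p j)) {ε δ : Fin n → Bool} (hne : ε ≠ δ) :
    atomF p ε * atomF p δ = 0 := by
  induction n with
  | zero => exact absurd (Subsingleton.elim ε δ) hne
  | succ n ih =>
    rw [atomF_succ (ε := ε), atomF_succ (ε := δ)]
    have hcom : atomF (fun i => p i.succ) (fun i => ε i.succ) *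
        (if δ 0 then p 0 else 1 - p 0)
        = (if δ 0 then p 0 else 1 - p 0) * atomF (fun i => p i.succ) (fun i => ε i.succ) := by
      have h1 : Commute (if δ 0 then p 0 else 1 - p 0)
          (atomF (fun i => p i.succ) (fun i => ε i.succ)) := by
        refine commute_atomF (fun (i : Fin n) => ?_) _
        by_cases hδ : δ 0
        · simpa [hδ] using hc 0 i.succ
        · simp only [hδ, if_false]
          exact Commute.sub_left (Commute.one_left _) (hc 0 i.succ)
      exact h1.symm.eq
    rw [mul_mul_mul_comm'' _ _ _ _ hcom]
    by_cases h0 : ε 0 = δ 0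
    · have htail : (fun (i : Fin n) => ε i.succ) ≠ (fun (i : Fin n) => δ i.succ) := by
        intro h
        apply hne
        funext i
        refine Fin.cases ?_ ?_ i
        · exact h0
        · exact fun j => congrFun h j
      rw [ih (fun k => hp k.succ) (fun k l => hc k.succ l.succ) htail, mul_zero]
    · have : (if ε 0 then p 0 else 1 - p 0) * (if δ 0 then p 0 else 1 - p 0) = 0 := by
        have e1 : p 0 * (1 - p 0) = 0 := by rw [mul_sub, mul_one, (hp 0).1, sub_self]
        have e2 : (1 - p 0) * p 0 = 0 := by rw [sub_mul, one_mul, (hp 0).1, sub_self]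
        cases hε : ε 0 <;> cases hδ : δ 0 <;> simp_all
      rw [this, zero_mul]

lemma smul_decomp {n : ℕ} {p : Fin n → (E →L[ℂ] E)} (hp : ∀ i, IsProjOp (p i))
    (hc : ∀ i j, Commute (p i) (p j)) (c : Fin n → ℂ) :
    ∑ i, c i • p i = ∑ ε : Fin n → Bool,
      (∑ i ∈ Finset.univ.filter (fun i => ε i = true), c i) • atomF p ε := by
  have step1 : ∀ i, p i = ∑ ε : Fin n → Bool, (if ε i then atomF p ε else 0) := by
    intro i
    calc p i = p i * 1 := (mul_one _).symm
    _ = p i * ∑ ε : Fin n → Bool, atomF p ε := by rw [atomF_sum]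
    _ = ∑ ε : Fin n → Bool, p i * atomF p ε := by rw [Finset.mul_sum]
    _ = ∑ ε : Fin n → Bool, (if ε i then atomF p ε else 0) := by
        exact Finset.sum_congr rfl fun ε _ => atomF_mul_left hp hc i ε
  calc ∑ i, c i • p i
      = ∑ i, ∑ ε : Fin n → Bool, c i • (if ε i then atomF p ε else 0) := by
        refine Finset.sum_congr rfl fun i _ => ?_
        rw [← Finset.smul_sum, ← step1]
    _ = ∑ ε : Fin n → Bool, ∑ i, (if ε i then c i else 0) • atomF p ε := by
        rw [Finset.sum_comm]
        refine Finset.sum_congr rfl fun ε _ => Finset.sum_congr rfl fun i _ => ?_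
        by_cases h : ε i <;> simp [h]
    _ = ∑ ε : Fin n → Bool,
        (∑ i ∈ Finset.univ.filter (fun i => ε i = true), c i) • atomF p ε := by
        refine Finset.sum_congr rfl fun ε _ => ?_
        rw [← Finset.sum_smul, Finset.sum_filter]

end Atoms2

section Norms
variable {E : Type*} [NormedAddCommGroup E] [InnerProductSpace ℂ E] [CompleteSpace E]
variable {κ : Type*} [Fintype κ]

lemma inner_proj_apply {e f : E →L[ℂ] E} (he : IsProjOp e) (x y : E) :
    (inner ℂ (e x) (f y) : ℂ) = inner ℂ x ((e * f) y) := by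
  have : (inner ℂ x ((ContinuousLinearMap.adjoint e) (f y)) : ℂ) = inner ℂ (e x) (f y) :=
    ContinuousLinearMap.adjoint_inner_right e x (f y)
  rw [← this]
  congr 1
  have hse : ContinuousLinearMap.adjoint e = e := he.2
  rw [hse]
  rfl

lemma orth_sum_proj {e : κ → (E →L[ℂ] E)} (hproj : ∀ k, IsProjOp (e k))
    (horth : ∀ k l, k ≠ l → e k * e l = 0) : IsProjOp (∑ k, e k) := by
  constructor
  · rw [Finset.sum_mul_sum]
    rw [Finset.sum_congr rfl (fun k _ => Finset.sum_eq_single k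
      (fun l _ hl => horth k l (Ne.symm hl)) (fun h => absurd (Finset.mem_univ k) h))]
    exact Finset.sum_congr rfl fun k _ => (hproj k).1
  · rw [star_sum]
    exact Finset.sum_congr rfl fun k _ => (hproj k).2

lemma norm_orth_smul_le {e : κ → (E →L[ℂ] E)} (hproj : ∀ k, IsProjOp (e k))
    (horth : ∀ k l, k ≠ l → e k * e l = 0) {c : κ → ℂ} {M : ℝ} (hM : 0 ≤ M)
    (hc : ∀ k, e k ≠ 0 → ‖c k‖ ≤ M) : ‖∑ k, c k • e k‖ ≤ M := by
  classical
  -- replace c by c' vanishing where e vanishes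
  set c' : κ → ℂ := fun k => if e k = 0 then 0 else c k with hc'
  have hsum : ∑ k, c k • e k = ∑ k, c' k • e k := by
    refine Finset.sum_congr rfl fun k _ => ?_
    by_cases h : e k = 0 <;> simp [hc', h]
  have hc'M : ∀ k, ‖c' k‖ ≤ M := by
    intro k
    by_cases h : e k = 0
    · simp [hc', h, hM]
    · simpa [hc', h] using hc k h
  rw [hsum]
  refine ContinuousLinearMap.opNorm_le_bound _ hM fun x => ?_
  have hTx : ‖(∑ k, c' k • e k) x‖ ^ 2 = ∑ k, ‖c' k‖ ^ 2 * ‖e k x‖ ^ 2 := by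
    have happ : (∑ k, c' k • e k) x = ∑ k, c' k • (e k x) := by
      rw [ContinuousLinearMap.sum_apply]; rfl
    rw [happ, pyth]
    · exact Finset.sum_congr rfl fun k _ => by rw [norm_smul, mul_pow]
    · intro k _ l _ hkl
      rw [inner_smul_left, inner_smul_right, inner_proj_apply (hproj k),
        horth k l hkl]
      simp
  have hEx : ∑ k, ‖e k x‖ ^ 2 = ‖(∑ k, e k) x‖ ^ 2 := by
    rw [ContinuousLinearMap.sum_apply, pyth]
    intro k _ l _ hkl
    rw [inner_proj_apply (hproj k), horth k l hkl]
    simp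
  have hEle : ‖(∑ k, e k) x‖ ≤ ‖x‖ := (orth_sum_proj hproj horth).apply_norm_le x
  have h1 : ‖(∑ k, c' k • e k) x‖ ^ 2 ≤ M ^ 2 * ‖x‖ ^ 2 := by
    rw [hTx]
    calc ∑ k, ‖c' k‖ ^ 2 * ‖e k x‖ ^ 2 ≤ ∑ k, M ^ 2 * ‖e k x‖ ^ 2 := by
          refine Finset.sum_le_sum fun k _ => ?_
          have := hc'M k
          have h2 : ‖c' k‖ ^ 2 ≤ M ^ 2 := by nlinarith [norm_nonneg (c' k)]
          nlinarith [sq_nonneg ‖e k x‖]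
      _ = M ^ 2 * ∑ k, ‖e k x‖ ^ 2 := by rw [Finset.mul_sum]
      _ = M ^ 2 * ‖(∑ k, e k) x‖ ^ 2 := by rw [hEx]
      _ ≤ M ^ 2 * ‖x‖ ^ 2 := by
          have h2 : ‖(∑ k, e k) x‖ ^ 2 ≤ ‖x‖ ^ 2 := by
            nlinarith [norm_nonneg ((∑ k, e k) x)]
          nlinarith [sq_nonneg M]
  nlinarith [norm_nonneg ((∑ k, c' k • e k) x), norm_nonneg x,
    mul_nonneg hM (norm_nonneg x)]

lemma norm_orth_smul_ge {e : κ → (E →L[ℂ] E)} (hproj : ∀ k, IsProjOp (e k))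
    (horth : ∀ k l, k ≠ l → e k * e l = 0) (c : κ → ℂ) {k : κ} (hk : e k ≠ 0) :
    ‖c k‖ ≤ ‖∑ l, c l • e l‖ := by
  classical
  obtain ⟨x, hx⟩ : ∃ x, e k x ≠ 0 := by
    by_contra h
    push_neg at h
    exact hk (ContinuousLinearMap.ext fun x => by simpa using h x)
  have happ : (∑ l, c l • e l) (e k x) = c k • e k x := by
    rw [ContinuousLinearMap.sum_apply]
    rw [Finset.sum_eq_single k (fun l _ hl => ?_) (fun h => absurd (Finset.mem_univ k) h)]
    · have : e k (e k x) = e k x := by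
        calc e k (e k x) = (e k * e k) x := rfl
        _ = e k x := by rw [(hproj k).1]
      simp [this]
    · have h0 : e l (e k x) = 0 := by
        have : (e l * e k) x = (0 : E →L[ℂ] E) x := by rw [horth l k hl]
        simpa using this
      simp [h0]
  have hle : ‖(∑ l, c l • e l) (e k x)‖ ≤ ‖∑ l, c l • e l‖ * ‖e k x‖ :=
    ContinuousLinearMap.le_opNorm _ _
  rw [happ, norm_smul] at hle
  have hpos : 0 < ‖e k x‖ := norm_pos_iff.mpr hx
  calc ‖c k‖ = ‖c k‖ * ‖e k x‖ / ‖e k x‖ := by field_simp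
  _ ≤ ‖∑ l, c l • e l‖ * ‖e k x‖ / ‖e k x‖ := by gcongr
  _ = ‖∑ l, c l • e l‖ := by field_simp

end Norms

section Key
variable {E : Type*} [NormedAddCommGroup E] [InnerProductSpace ℂ E] [CompleteSpace E]
variable {F : Type*} [NormedAddCommGroup F] [InnerProductSpace ℂ F] [CompleteSpace F]

lemma key_ineq {n : ℕ} {p : Fin n → (E →L[ℂ] E)} {q : Fin n → (F →L[ℂ] F)}
    (hp : ∀ i, IsProjOp (p i)) (hq : ∀ i, IsProjOp (q i))
    (hpc : ∀ i j, Commute (p i) (p j)) (hqc : ∀ i j, Commute (q i) (q j))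
    (hz : ∀ ε : Fin n → Bool, atomF p ε = 0 → atomF q ε = 0) (c : Fin n → ℂ) :
    ‖∑ i, c i • q i‖ ≤ ‖∑ i, c i • p i‖ := by
  rw [smul_decomp hp hpc c, smul_decomp hq hqc c]
  have horthp : ∀ ε δ : Fin n → Bool, ε ≠ δ → atomF p ε * atomF p δ = 0 :=
    fun ε δ h => atomF_orth hp hpc h
  have horthq : ∀ ε δ : Fin n → Bool, ε ≠ δ → atomF q ε * atomF q δ = 0 :=
    fun ε δ h => atomF_orth hq hqc h
  refine norm_orth_smul_le (e := fun ε : Fin n → Bool => atomF q ε)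
    (c := fun ε : Fin n → Bool => ∑ i ∈ Finset.univ.filter (fun i => ε i = true), c i)
    (fun ε => atomF_proj hq hqc ε) horthq (norm_nonneg _) fun ε hε => ?_
  have hpε : atomF p ε ≠ 0 := fun h => hε (hz ε h)
  exact norm_orth_smul_ge (e := fun δ : Fin n → Bool => atomF p δ)
    (fun δ => atomF_proj hp hpc δ) horthp
    (fun δ : Fin n → Bool => ∑ i ∈ Finset.univ.filter (fun i => δ i = true), c i) hpε

end Key

section ProjLE
variable {E : Type*} [NormedAddCommGroup E] [InnerProductSpace ℂ E] [CompleteSpace E]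

lemma commute_of_eq' {R : Type*} [Ring R] {a b : R} (h : a * b = b * a) : Commute a b := h

lemma projLE_mul_left' {P Q : E →L[ℂ] E} (hP : IsProjOp P) (hcomm : P * Q = Q * P) :
    projLE (P * Q) P := by
  show P * Q * P = P * Q
  calc P * Q * P = P * (Q * P) := mul_assoc _ _ _
  _ = P * (P * Q) := by rw [hcomm]
  _ = P * P * Q := (mul_assoc _ _ _).symm
  _ = P * Q := by rw [hP.1]

lemma projLE_mul_right' {P Q : E →L[ℂ] E} (hQ : IsProjOp Q) : projLE (P * Q) Q := by
  show P * Q * Q = P * Q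
  rw [mul_assoc, hQ.1]

lemma projLE_mul_of' {R P Q : E →L[ℂ] E} (h1 : projLE R P) (h2 : projLE R Q) :
    projLE R (P * Q) := by
  show R * (P * Q) = R
  rw [← mul_assoc, h1, h2]

lemma projLE_join_left' {P Q : E →L[ℂ] E} (hP : IsProjOp P) : projLE P (P + Q - P * Q) := by
  show P * (P + Q - P * Q) = P
  calc P * (P + Q - P * Q) = P * P + P * Q - P * (P * Q) := by rw [mul_sub, mul_add]
  _ = P + P * Q - P * Q := by rw [hP.1, ← mul_assoc, hP.1]
  _ = P := by abel

lemma projLE_join_right' {P Q : E →L[ℂ] E} (hQ : IsProjOp Q) (hcomm : P * Q = Q * P) :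
    projLE Q (P + Q - P * Q) := by
  show Q * (P + Q - P * Q) = Q
  have h1 : Q * (P * Q) = Q * P := by
    calc Q * (P * Q) = (Q * P) * Q := (mul_assoc _ _ _).symm
    _ = (P * Q) * Q := by rw [hcomm]
    _ = P * (Q * Q) := mul_assoc _ _ _
    _ = P * Q := by rw [hQ.1]
    _ = Q * P := hcomm
  calc Q * (P + Q - P * Q) = Q * P + Q * Q - Q * (P * Q) := by rw [mul_sub, mul_add]
  _ = Q * P + Q - Q * P := by rw [hQ.1, h1]
  _ = Q := by abel

lemma projLE_join_of' {P Q W : E →L[ℂ] E} (h1 : projLE P W) (h2 : projLE Q W) :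
    projLE (P + Q - P * Q) W := by
  show (P + Q - P * Q) * W = P + Q - P * Q
  rw [sub_mul, add_mul, h1, h2, mul_assoc, h2]

/-- meet of the `true`-indexed entries. -/
def meetF : {n : ℕ} → (Fin n → (E →L[ℂ] E)) → (Fin n → Bool) → (E →L[ℂ] E)
  | 0, _, _ => 1
  | _+1, p, ε =>
    (if ε 0 then p 0 else 1) * meetF (fun i => p i.succ) (fun i => ε i.succ)

/-- join of the `false`-indexed entries. -/
def joinF : {n : ℕ} → (Fin n → (E →L[ℂ] E)) → (Fin n → Bool) → (E →L[ℂ] E)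
  | 0, _, _ => 0
  | _+1, p, ε =>
    if ε 0 then joinF (fun i => p i.succ) (fun i => ε i.succ)
    else p 0 + joinF (fun i => p i.succ) (fun i => ε i.succ)
      - p 0 * joinF (fun i => p i.succ) (fun i => ε i.succ)

lemma meetF_succ {n : ℕ} (p : Fin (n+1) → (E →L[ℂ] E)) (ε : Fin (n+1) → Bool) :
    meetF p ε = (if ε 0 then p 0 else 1) * meetF (fun i => p i.succ) (fun i => ε i.succ) := rfl

lemma joinF_succ {n : ℕ} (p : Fin (n+1) → (E →L[ℂ] E)) (ε : Fin (n+1) → Bool) :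
    joinF p ε = if ε 0 then joinF (fun i => p i.succ) (fun i => ε i.succ)
    else p 0 + joinF (fun i => p i.succ) (fun i => ε i.succ)
      - p 0 * joinF (fun i => p i.succ) (fun i => ε i.succ) := rfl

lemma commute_meetF {n : ℕ} {p : Fin n → (E →L[ℂ] E)} {T : E →L[ℂ] E}
    (h : ∀ i, Commute T (p i)) (ε : Fin n → Bool) : Commute T (meetF p ε) := by
  induction n with
  | zero => exact Commute.one_right T
  | succ n ih =>
    rw [meetF_succ]
    refine Commute.mul_right ?_ (ih (fun i => h i.succ) _)
    by_cases hε : ε 0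
    · simpa [hε] using h 0
    · simpa [hε] using Commute.one_right T

lemma commute_joinF {n : ℕ} {p : Fin n → (E →L[ℂ] E)} {T : E →L[ℂ] E}
    (h : ∀ i, Commute T (p i)) (ε : Fin n → Bool) : Commute T (joinF p ε) := by
  induction n with
  | zero => exact Commute.zero_right T
  | succ n ih =>
    rw [joinF_succ]
    have htail := ih (fun i => h i.succ) (fun i => ε i.succ)
    by_cases hε : ε 0
    · simpa [hε] using htail
    · simp only [hε, if_false]
      exact ((h 0).add_right htail).sub_right ((h 0).mul_right htail)

lemma atomF_eq_meet_join {n : ℕ} {p : Fin n → (E →L[ℂ] E)}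
    (hc : ∀ i j, Commute (p i) (p j)) (ε : Fin n → Bool) :
    atomF p ε = meetF p ε * (1 - joinF p ε) := by
  induction n with
  | zero =>
    show (1 : E →L[ℂ] E) = 1 * (1 - 0)
    simp
  | succ n ih =>
    have IH := ih (fun i j => hc i.succ j.succ) (fun i => ε i.succ)
    rw [atomF_succ, meetF_succ, joinF_succ, IH]
    by_cases hε : ε 0
    · simp only [hε, if_true]
      rw [mul_assoc]
    · simp only [hε, if_false]
      have hQ : Commute (p 0) (meetF (fun i => p i.succ) (fun i => ε i.succ)) :=
        commute_meetF (fun i => hc 0 i.succ) _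
      set Qt := meetF (fun i => p i.succ) (fun i => ε i.succ) with hQt
      set Vt := joinF (fun i => p i.succ) (fun i => ε i.succ) with hVt
      have h2 : (1 - p 0) * Qt = Qt * (1 - p 0) := by
        rw [sub_mul, one_mul, mul_sub, mul_one, hQ.eq]
      calc (1 - p 0) * (Qt * (1 - Vt)) = ((1 - p 0) * Qt) * (1 - Vt) := (mul_assoc _ _ _).symm
      _ = (Qt * (1 - p 0)) * (1 - Vt) := by rw [h2]
      _ = Qt * ((1 - p 0) * (1 - Vt)) := mul_assoc _ _ _
      _ = (1 * Qt) * (1 - (p 0 + Vt - p 0 * Vt)) := by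
          rw [one_mul]
          congr 1
          noncomm_ring
      
lemma meetF_mem {S : Set (E →L[ℂ] E)} (hone : (1 : E →L[ℂ] E) ∈ S)
    (hlat : ∀ P ∈ S, ∀ Q ∈ S, P * Q ∈ S ∧ P + Q - P * Q ∈ S)
    {n : ℕ} {p : Fin n → (E →L[ℂ] E)} (hp : ∀ i, p i ∈ S) (ε : Fin n → Bool) :
    meetF p ε ∈ S := by
  induction n with
  | zero => exact hone
  | succ n ih =>
    rw [meetF_succ]
    have h0 : (if ε 0 then p 0 else 1) ∈ S := by
      by_cases hε : ε 0
      · simpa [hε] using hp 0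
      · simpa [hε] using hone
    exact (hlat _ h0 _ (ih (fun i => hp i.succ) _)).1

lemma joinF_mem {S : Set (E →L[ℂ] E)} (hzero : (0 : E →L[ℂ] E) ∈ S)
    (hlat : ∀ P ∈ S, ∀ Q ∈ S, P * Q ∈ S ∧ P + Q - P * Q ∈ S)
    {n : ℕ} {p : Fin n → (E →L[ℂ] E)} (hp : ∀ i, p i ∈ S) (ε : Fin n → Bool) :
    joinF p ε ∈ S := by
  induction n with
  | zero => exact hzero
  | succ n ih =>
    rw [joinF_succ]
    have htail := ih (fun i => hp i.succ) (fun i => ε i.succ)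
    by_cases hε : ε 0
    · simpa [hε] using htail
    · simpa [hε] using (hlat _ (hp 0) _ htail).2

end ProjLE

section Lattice
variable {H₁ : Type*} [NormedAddCommGroup H₁] [InnerProductSpace ℂ H₁] [CompleteSpace H₁]
variable {H₂ : Type*} [NormedAddCommGroup H₂] [InnerProductSpace ℂ H₂] [CompleteSpace H₂]

structure GoodLat (S₁ : Set (H₁ →L[ℂ] H₁)) (S₂ : Set (H₂ →L[ℂ] H₂))
    (θ : (H₁ →L[ℂ] H₁) → (H₂ →L[ℂ] H₂)) : Prop where
  proj₁ : ∀ P ∈ S₁, IsProjOp P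
  proj₂ : ∀ P ∈ S₂, IsProjOp P
  comm₁ : ∀ P ∈ S₁, ∀ Q ∈ S₁, P * Q = Q * P
  comm₂ : ∀ P ∈ S₂, ∀ Q ∈ S₂, P * Q = Q * P
  zero₁ : (0 : H₁ →L[ℂ] H₁) ∈ S₁
  one₁ : (1 : H₁ →L[ℂ] H₁) ∈ S₁
  zero₂ : (0 : H₂ →L[ℂ] H₂) ∈ S₂
  one₂ : (1 : H₂ →L[ℂ] H₂) ∈ S₂
  lat₁ : ∀ P ∈ S₁, ∀ Q ∈ S₁, P * Q ∈ S₁ ∧ P + Q - P * Q ∈ S₁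
  lat₂ : ∀ P ∈ S₂, ∀ Q ∈ S₂, P * Q ∈ S₂ ∧ P + Q - P * Q ∈ S₂
  bij : Set.BijOn θ S₁ S₂
  mono : ∀ P ∈ S₁, ∀ Q ∈ S₁, (projLE P Q ↔ projLE (θ P) (θ Q))

namespace GoodLat

variable {S₁ : Set (H₁ →L[ℂ] H₁)} {S₂ : Set (H₂ →L[ℂ] H₂)}
  {θ : (H₁ →L[ℂ] H₁) → (H₂ →L[ℂ] H₂)}

lemma mem₂ (h : GoodLat S₁ S₂ θ) {P} (hP : P ∈ S₁) : θ P ∈ S₂ := h.bij.1 hP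

lemma antisymm₂ (h : GoodLat S₁ S₂ θ) {P Q} (hP : P ∈ S₂) (hQ : Q ∈ S₂)
    (h1 : projLE P Q) (h2 : projLE Q P) : P = Q := by
  calc P = P * Q := h1.symm
  _ = Q * P := h.comm₂ P hP Q hQ
  _ = Q := h2

lemma theta_one (h : GoodLat S₁ S₂ θ) : θ 1 = 1 := by
  have h1 : ∀ W ∈ S₂, projLE W (θ 1) := by
    intro W hW
    obtain ⟨W₀, hW₀, rfl⟩ := h.bij.2.2 hW
    exact (h.mono W₀ hW₀ 1 h.one₁).mp (mul_one W₀)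
  have h2 : (1 : H₂ →L[ℂ] H₂) * θ 1 = 1 := h1 1 h.one₂
  rwa [one_mul] at h2

lemma theta_zero (h : GoodLat S₁ S₂ θ) : θ 0 = 0 := by
  have h1 : ∀ W ∈ S₂, projLE (θ 0) W := by
    intro W hW
    obtain ⟨W₀, hW₀, rfl⟩ := h.bij.2.2 hW
    exact (h.mono 0 h.zero₁ W₀ hW₀).mp (zero_mul W₀)
  have h2 : θ 0 * 0 = θ 0 := h1 0 h.zero₂
  rw [mul_zero] at h2
  exact h2.symm

lemma theta_mul (h : GoodLat S₁ S₂ θ) {P Q} (hP : P ∈ S₁) (hQ : Q ∈ S₁) :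
    θ (P * Q) = θ P * θ Q := by
  have hPQ : P * Q ∈ S₁ := (h.lat₁ P hP Q hQ).1
  have hθP : θ P ∈ S₂ := h.mem₂ hP
  have hθQ : θ Q ∈ S₂ := h.mem₂ hQ
  have hN : θ P * θ Q ∈ S₂ := (h.lat₂ _ hθP _ hθQ).1
  obtain ⟨N₀, hN₀, hN₀eq⟩ := h.bij.2.2 hN
  have hle1 : projLE (θ (P * Q)) (θ P * θ Q) := by
    refine projLE_mul_of' ?_ ?_
    · exact (h.mono (P * Q) hPQ P hP).mp
        (projLE_mul_left' (h.proj₁ P hP) (h.comm₁ P hP Q hQ))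
    · exact (h.mono (P * Q) hPQ Q hQ).mp (projLE_mul_right' (h.proj₁ Q hQ))
  have hle2 : projLE (θ P * θ Q) (θ (P * Q)) := by
    have ha : projLE N₀ P := (h.mono N₀ hN₀ P hP).mpr (by
      rw [hN₀eq]
      exact projLE_mul_left' (h.proj₂ _ hθP) (h.comm₂ _ hθP _ hθQ))
    have hb : projLE N₀ Q := (h.mono N₀ hN₀ Q hQ).mpr (by
      rw [hN₀eq]
      exact projLE_mul_right' (h.proj₂ _ hθQ))
    have hcle : projLE N₀ (P * Q) := projLE_mul_of' ha hb
    have := (h.mono N₀ hN₀ (P * Q) hPQ).mp hcle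
    rwa [hN₀eq] at this
  exact h.antisymm₂ (h.mem₂ hPQ) hN hle1 hle2

lemma theta_join (h : GoodLat S₁ S₂ θ) {P Q} (hP : P ∈ S₁) (hQ : Q ∈ S₁) :
    θ (P + Q - P * Q) = θ P + θ Q - θ P * θ Q := by
  have hPQ : P + Q - P * Q ∈ S₁ := (h.lat₁ P hP Q hQ).2
  have hθP : θ P ∈ S₂ := h.mem₂ hP
  have hθQ : θ Q ∈ S₂ := h.mem₂ hQ
  have hN : θ P + θ Q - θ P * θ Q ∈ S₂ := (h.lat₂ _ hθP _ hθQ).2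
  obtain ⟨N₀, hN₀, hN₀eq⟩ := h.bij.2.2 hN
  have hle1 : projLE (θ (P + Q - P * Q)) (θ P + θ Q - θ P * θ Q) := by
    have ha : projLE P N₀ := (h.mono P hP N₀ hN₀).mpr (by
      rw [hN₀eq]
      exact projLE_join_left' (h.proj₂ _ hθP))
    have hb : projLE Q N₀ := (h.mono Q hQ N₀ hN₀).mpr (by
      rw [hN₀eq]
      exact projLE_join_right' (h.proj₂ _ hθQ) (h.comm₂ _ hθP _ hθQ))
    have hcle : projLE (P + Q - P * Q) N₀ := projLE_join_of' ha hb
    have := (h.mono (P + Q - P * Q) hPQ N₀ hN₀).mp hcle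
    rwa [hN₀eq] at this
  have hle2 : projLE (θ P + θ Q - θ P * θ Q) (θ (P + Q - P * Q)) := by
    refine projLE_join_of' ?_ ?_
    · exact (h.mono P hP (P + Q - P * Q) hPQ).mp
        (projLE_join_left' (h.proj₁ P hP))
    · exact (h.mono Q hQ (P + Q - P * Q) hPQ).mp
        (projLE_join_right' (h.proj₁ Q hQ) (h.comm₁ P hP Q hQ))
  exact (h.antisymm₂ hN (h.mem₂ hPQ) hle2 hle1).symm

lemma theta_meetF (h : GoodLat S₁ S₂ θ) {n : ℕ} {p : Fin n → (H₁ →L[ℂ] H₁)}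
    (hp : ∀ i, p i ∈ S₁) (ε : Fin n → Bool) :
    θ (meetF p ε) = meetF (fun i => θ (p i)) ε := by
  induction n with
  | zero => exact h.theta_one
  | succ n ih =>
    rw [meetF_succ, meetF_succ]
    have h0 : (if ε 0 then p 0 else 1) ∈ S₁ := by
      by_cases hε : ε 0
      · simpa [hε] using hp 0
      · simpa [hε] using h.one₁
    have htail : meetF (fun i => p i.succ) (fun i => ε i.succ) ∈ S₁ :=
      meetF_mem h.one₁ h.lat₁ (fun i => hp i.succ) _
    rw [h.theta_mul h0 htail, ih (fun i => hp i.succ)]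
    congr 1
    by_cases hε : ε 0
    · simp [hε]
    · simp [hε, h.theta_one]

lemma theta_joinF (h : GoodLat S₁ S₂ θ) {n : ℕ} {p : Fin n → (H₁ →L[ℂ] H₁)}
    (hp : ∀ i, p i ∈ S₁) (ε : Fin n → Bool) :
    θ (joinF p ε) = joinF (fun i => θ (p i)) ε := by
  induction n with
  | zero => exact h.theta_zero
  | succ n ih =>
    rw [joinF_succ, joinF_succ]
    have htail : joinF (fun i => p i.succ) (fun i => ε i.succ) ∈ S₁ :=
      joinF_mem h.zero₁ h.lat₁ (fun i => hp i.succ) _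
    by_cases hε : ε 0
    · rw [if_pos hε, if_pos hε]
      exact ih (fun i => hp i.succ) _
    · rw [if_neg hε, if_neg hε, h.theta_join (hp 0) htail, ih (fun i => hp i.succ) _]

lemma atom_zero_iff (h : GoodLat S₁ S₂ θ) {n : ℕ} {p : Fin n → (H₁ →L[ℂ] H₁)}
    (hp : ∀ i, p i ∈ S₁) (ε : Fin n → Bool) :
    (atomF p ε = 0 ↔ atomF (fun i => θ (p i)) ε = 0) := by
  have hcomm₁ : ∀ i j, Commute (p i) (p j) :=
    fun i j => commute_of_eq' (h.comm₁ _ (hp i) _ (hp j))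
  have hcomm₂ : ∀ i j, Commute (θ (p i)) (θ (p j)) :=
    fun i j => commute_of_eq' (h.comm₂ _ (h.mem₂ (hp i)) _ (h.mem₂ (hp j)))
  have hQ : meetF p ε ∈ S₁ := meetF_mem h.one₁ h.lat₁ hp ε
  have hV : joinF p ε ∈ S₁ := joinF_mem h.zero₁ h.lat₁ hp ε
  have hQV : meetF p ε * joinF p ε ∈ S₁ := (h.lat₁ _ hQ _ hV).1
  have e1 : atomF p ε = meetF p ε - meetF p ε * joinF p ε := by
    rw [atomF_eq_meet_join hcomm₁, mul_sub, mul_one]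
  have e2 : atomF (fun i => θ (p i)) ε = θ (meetF p ε) - θ (meetF p ε * joinF p ε) := by
    rw [atomF_eq_meet_join hcomm₂, mul_sub, mul_one, ← h.theta_meetF hp,
      ← h.theta_joinF hp, ← h.theta_mul hQ hV]
  rw [e1, e2, sub_eq_zero, sub_eq_zero]
  constructor
  · intro he; conv_lhs => rw [he]
  · intro he; exact h.bij.2.1 hQ hQV he

end GoodLat
end Lattice

section Construct
variable {H₁ : Type*} [NormedAddCommGroup H₁] [InnerProductSpace ℂ H₁] [CompleteSpace H₁]
variable {H₂ : Type*} [NormedAddCommGroup H₂] [InnerProductSpace ℂ H₂] [CompleteSpace H₂]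

lemma finsupp_comb_eq_fin_sum {M : Type*} [AddCommGroup M] [Module ℂ M] {α : Type*}
    (v : α → M) (d : α →₀ ℂ) :
    Finsupp.linearCombination ℂ v d
      = ∑ i : Fin d.support.card,
          d ↑(d.support.equivFin.symm i) • v ↑(d.support.equivFin.symm i) := by
  rw [Finsupp.linearCombination_apply, Finsupp.sum]
  rw [← Finset.sum_coe_sort d.support (fun x => d x • v x)]
  exact (Equiv.sum_comp d.support.equivFin.symm
    (fun x : ↥d.support => d ↑x • v ↑x)).symm

namespace GoodLat

variable {S₁ : Set (H₁ →L[ℂ] H₁)} {S₂ : Set (H₂ →L[ℂ] H₂)}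
  {θ : (H₁ →L[ℂ] H₁) → (H₂ →L[ℂ] H₂)}

lemma norm_comb_le (h : GoodLat S₁ S₂ θ) (d : ↥S₁ →₀ ℂ) :
    ‖Finsupp.linearCombination ℂ (fun P : ↥S₁ => θ (P : H₁ →L[ℂ] H₁)) d‖
      ≤ ‖Finsupp.linearCombination ℂ (fun P : ↥S₁ => (P : H₁ →L[ℂ] H₁)) d‖ := by
  rw [finsupp_comb_eq_fin_sum, finsupp_comb_eq_fin_sum]
  have hpS : ∀ i : Fin d.support.card,
      ((d.support.equivFin.symm i : ↥S₁) : H₁ →L[ℂ] H₁) ∈ S₁ :=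
    fun i => (d.support.equivFin.symm i).1.2
  exact key_ineq (fun i => h.proj₁ _ (hpS i))
    (fun i => h.proj₂ _ (h.mem₂ (hpS i)))
    (fun i j => commute_of_eq' (h.comm₁ _ (hpS i) _ (hpS j)))
    (fun i j => commute_of_eq' (h.comm₂ _ (h.mem₂ (hpS i)) _ (h.mem₂ (hpS j))))
    (fun ε h0 => (h.atom_zero_iff hpS ε).mp h0) _

lemma norm_comb_ge (h : GoodLat S₁ S₂ θ) (d : ↥S₁ →₀ ℂ) :
    ‖Finsupp.linearCombination ℂ (fun P : ↥S₁ => (P : H₁ →L[ℂ] H₁)) d‖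
      ≤ ‖Finsupp.linearCombination ℂ (fun P : ↥S₁ => θ (P : H₁ →L[ℂ] H₁)) d‖ := by
  rw [finsupp_comb_eq_fin_sum, finsupp_comb_eq_fin_sum]
  have hpS : ∀ i : Fin d.support.card,
      ((d.support.equivFin.symm i : ↥S₁) : H₁ →L[ℂ] H₁) ∈ S₁ :=
    fun i => (d.support.equivFin.symm i).1.2
  exact key_ineq (fun i => h.proj₂ _ (h.mem₂ (hpS i)))
    (fun i => h.proj₁ _ (hpS i))
    (fun i j => commute_of_eq' (h.comm₂ _ (h.mem₂ (hpS i)) _ (h.mem₂ (hpS j))))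
    (fun i j => commute_of_eq' (h.comm₁ _ (hpS i) _ (hpS j)))
    (fun ε h0 => (h.atom_zero_iff hpS ε).mpr h0) _

set_option maxHeartbeats 1000000 in
lemma exists_rho (h : GoodLat S₁ S₂ θ) :
    ∃ ρ : (H₁ →L[ℂ] H₁) → (H₂ →L[ℂ] H₂),
      Set.MapsTo ρ
        (closure ((Submodule.span ℂ S₁ : Submodule ℂ (H₁ →L[ℂ] H₁)) : Set (H₁ →L[ℂ] H₁)))
        (closure ((Submodule.span ℂ S₂ : Submodule ℂ (H₂ →L[ℂ] H₂)) : Set (H₂ →L[ℂ] H₂))) ∧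
      ContinuousOn ρ
        (closure ((Submodule.span ℂ S₁ : Submodule ℂ (H₁ →L[ℂ] H₁)) : Set (H₁ →L[ℂ] H₁))) ∧
      (∀ P ∈ S₁, ρ P = θ P) ∧
      (∀ a ∈ closure ((Submodule.span ℂ S₁ : Submodule ℂ (H₁ →L[ℂ] H₁)) : Set (H₁ →L[ℂ] H₁)),
        ∀ b ∈ closure ((Submodule.span ℂ S₁ : Submodule ℂ (H₁ →L[ℂ] H₁)) : Set (H₁ →L[ℂ] H₁)),
        ρ (a + b) = ρ a + ρ b) ∧
      (∀ (c : ℂ),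
        ∀ a ∈ closure ((Submodule.span ℂ S₁ : Submodule ℂ (H₁ →L[ℂ] H₁)) : Set (H₁ →L[ℂ] H₁)),
        ρ (c • a) = c • ρ a) ∧
      (∀ a ∈ closure ((Submodule.span ℂ S₁ : Submodule ℂ (H₁ →L[ℂ] H₁)) : Set (H₁ →L[ℂ] H₁)),
        ∀ b ∈ closure ((Submodule.span ℂ S₁ : Submodule ℂ (H₁ →L[ℂ] H₁)) : Set (H₁ →L[ℂ] H₁)),
        ρ (a * b) = ρ a * ρ b) ∧
      (∀ a ∈ closure ((Submodule.span ℂ S₁ : Submodule ℂ (H₁ →L[ℂ] H₁)) : Set (H₁ →L[ℂ] H₁)),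
        ρ (star a) = star (ρ a)) := by
  classical
  set W₁ : Submodule ℂ (H₁ →L[ℂ] H₁) := Submodule.span ℂ S₁ with hW₁def
  set W₂ : Submodule ℂ (H₂ →L[ℂ] H₂) := Submodule.span ℂ S₂ with hW₂def
  set F : (↥S₁ →₀ ℂ) →ₗ[ℂ] (H₁ →L[ℂ] H₁) :=
    Finsupp.linearCombination ℂ (fun P : ↥S₁ => (P : H₁ →L[ℂ] H₁)) with hFdef
  set G : (↥S₁ →₀ ℂ) →ₗ[ℂ] (H₂ →L[ℂ] H₂) :=
    Finsupp.linearCombination ℂ (fun P : ↥S₁ => θ (P : H₁ →L[ℂ] H₁)) with hGdef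
  have hrange : LinearMap.range F = W₁ := by
    rw [hFdef, Finsupp.range_linearCombination, hW₁def]
    congr 1
    exact Subtype.range_coe
  have hex : ∀ x ∈ W₁, ∃ d, F d = x := by
    intro x hx
    rw [← hrange] at hx
    exact LinearMap.mem_range.mp hx
  have hGF : ∀ d d', F d = F d' → G d = G d' := by
    intro d d' hdd
    have h1 : ‖G (d - d')‖ ≤ ‖F (d - d')‖ := h.norm_comb_le (d - d')
    have h2 : F (d - d') = 0 := by rw [map_sub, hdd, sub_self]
    rw [h2, norm_zero] at h1
    rw [← sub_eq_zero, ← map_sub, ← norm_le_zero_iff]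
    exact h1
  choose D hD using hex
  set φ₀ : (H₁ →L[ℂ] H₁) → (H₂ →L[ℂ] H₂) :=
    fun x => if hx : x ∈ W₁ then G (D x hx) else 0 with hφ₀def
  have hFW : ∀ d, F d ∈ W₁ := by
    intro d
    rw [← hrange]
    exact LinearMap.mem_range.mpr ⟨d, rfl⟩
  have hφ₀ : ∀ d, φ₀ (F d) = G d := by
    intro d
    rw [hφ₀def]
    simp only [dif_pos (hFW d)]
    exact hGF _ _ (hD (F d) (hFW d))
  have hφ₀x : ∀ x (hx : x ∈ W₁) d, F d = x → φ₀ x = G d := by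
    intro x hx d hd
    rw [← hd, hφ₀]
  have hzero : φ₀ 0 = 0 := by
    have h0 : F 0 = 0 := map_zero F
    have := hφ₀ 0
    rw [h0, map_zero] at this
    exact this
  have hadd : ∀ x ∈ W₁, ∀ y ∈ W₁, φ₀ (x + y) = φ₀ x + φ₀ y := by
    intro x hx y hy
    have hsum : F (D x hx + D y hy) = x + y := by
      rw [map_add, hD x hx, hD y hy]
    rw [hφ₀x _ (add_mem hx hy) _ hsum, map_add,
      hφ₀x x hx _ (hD x hx), hφ₀x y hy _ (hD y hy)]
  have hsmul : ∀ (c : ℂ), ∀ x ∈ W₁, φ₀ (c • x) = c • φ₀ x := by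
    intro c x hx
    have hs : F (c • D x hx) = c • x := by rw [map_smul, hD x hx]
    rw [hφ₀x _ (Submodule.smul_mem _ c hx) _ hs, map_smul, hφ₀x x hx _ (hD x hx)]
  have hθeq : ∀ P (hP : P ∈ S₁), φ₀ P = θ P := by
    intro P hP
    have hs : F (Finsupp.single ⟨P, hP⟩ 1) = P := by
      rw [hFdef]
      rw [Finsupp.linearCombination_single, one_smul]
    rw [hφ₀x _ (Submodule.subset_span hP) _ hs, hGdef,
      Finsupp.linearCombination_single, one_smul]
  have hnorm : ∀ x (hx : x ∈ W₁), ‖φ₀ x‖ = ‖x‖ := by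
    intro x hx
    rw [hφ₀x _ hx _ (hD x hx)]
    conv_rhs => rw [← hD x hx]
    have hle : ‖G (D x hx)‖ ≤ ‖F (D x hx)‖ := h.norm_comb_le (D x hx)
    have hge : ‖F (D x hx)‖ ≤ ‖G (D x hx)‖ := h.norm_comb_ge (D x hx)
    exact le_antisymm hle hge
  have hmemW₂ : ∀ x ∈ W₁, φ₀ x ∈ W₂ := by
    intro x hx
    rw [hφ₀x _ hx _ (hD x hx)]
    have h1 : G (D x hx) ∈ LinearMap.range G := LinearMap.mem_range.mpr ⟨_, rfl⟩
    rw [hGdef, Finsupp.range_linearCombination] at h1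
    refine Submodule.span_mono ?_ h1
    rintro _ ⟨P, rfl⟩
    exact h.mem₂ P.2
  -- multiplicativity on the span
  have hbase : ∀ P ∈ S₁, ∀ y ∈ W₁, (P * y ∈ W₁ ∧ φ₀ (P * y) = φ₀ P * φ₀ y) := by
    intro P hP y hy
    refine Submodule.span_induction ?_ ?_ ?_ ?_ hy
    · intro Q hQ
      have hPQ : P * Q ∈ S₁ := (h.lat₁ P hP Q hQ).1
      refine ⟨Submodule.subset_span hPQ, ?_⟩
      rw [hθeq _ hPQ, hθeq _ hP, hθeq _ hQ, h.theta_mul hP hQ]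
    · refine ⟨by rw [mul_zero]; exact zero_mem _, ?_⟩
      rw [mul_zero, hzero, mul_zero]
    · rintro x y hxW hyW ⟨hm1, he1⟩ ⟨hm2, he2⟩
      refine ⟨by rw [mul_add]; exact add_mem hm1 hm2, ?_⟩
      rw [mul_add, hadd _ hm1 _ hm2, he1, he2, hadd _ hxW _ hyW, mul_add]
    · rintro c x hxW ⟨hm, he⟩
      refine ⟨by rw [mul_smul_comm]; exact Submodule.smul_mem _ c hm, ?_⟩
      rw [mul_smul_comm, hsmul _ _ hm, he, hsmul _ _ hxW, mul_smul_comm]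
  have hmulW : ∀ x ∈ W₁, ∀ y ∈ W₁, (x * y ∈ W₁ ∧ φ₀ (x * y) = φ₀ x * φ₀ y) := by
    intro x hx y hy
    refine Submodule.span_induction ?_ ?_ ?_ ?_ hx
    · intro P hP; exact hbase P hP y hy
    · refine ⟨by rw [zero_mul]; exact zero_mem _, ?_⟩
      rw [zero_mul, hzero, zero_mul]
    · rintro a b haW hbW ⟨hm1, he1⟩ ⟨hm2, he2⟩
      refine ⟨by rw [add_mul]; exact add_mem hm1 hm2, ?_⟩
      rw [add_mul, hadd _ hm1 _ hm2, he1, he2, hadd _ haW _ hbW, add_mul]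
    · rintro c a haW ⟨hm, he⟩
      refine ⟨by rw [smul_mul_assoc]; exact Submodule.smul_mem _ c hm, ?_⟩
      rw [smul_mul_assoc, hsmul _ _ hm, he, hsmul _ _ haW, smul_mul_assoc]
  have hstarW : ∀ x ∈ W₁, (star x ∈ W₁ ∧ φ₀ (star x) = star (φ₀ x)) := by
    intro x hx
    refine Submodule.span_induction ?_ ?_ ?_ ?_ hx
    · intro P hP
      have hsP : star P = P := (h.proj₁ P hP).2
      refine ⟨by rw [hsP]; exact Submodule.subset_span hP, ?_⟩
      rw [hsP, hθeq _ hP, (h.proj₂ _ (h.mem₂ hP)).2]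
    · refine ⟨by rw [star_zero]; exact zero_mem _, ?_⟩
      rw [star_zero, hzero, star_zero]
    · rintro a b haW hbW ⟨hm1, he1⟩ ⟨hm2, he2⟩
      refine ⟨by rw [star_add]; exact add_mem hm1 hm2, ?_⟩
      rw [star_add, hadd _ hm1 _ hm2, he1, he2, hadd _ haW _ hbW, star_add]
    · rintro c a haW ⟨hm, he⟩
      refine ⟨by rw [star_smul]; exact Submodule.smul_mem _ _ hm, ?_⟩
      rw [star_smul, hsmul _ _ hm, he, hsmul _ _ haW, star_smul]
  -- the continuous extension
  set Wb : Submodule ℂ (H₁ →L[ℂ] H₁) := W₁.topologicalClosure with hWbdef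
  have hWbar : (Wb : Set (H₁ →L[ℂ] H₁)) = closure (W₁ : Set (H₁ →L[ℂ] H₁)) :=
    W₁.topologicalClosure_coe
  have hmem : ∀ x, x ∈ closure (W₁ : Set (H₁ →L[ℂ] H₁)) → x ∈ Wb := by
    intro x hx
    rw [← SetLike.mem_coe, hWbar]
    exact hx
  have hmem' : ∀ x, x ∈ Wb → x ∈ closure (W₁ : Set (H₁ →L[ℂ] H₁)) := by
    intro x hx
    rw [← hWbar]
    exact hx
  set φLM : ↥W₁ →ₗ[ℂ] (H₂ →L[ℂ] H₂) :=
    { toFun := fun w => φ₀ ↑w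
      map_add' := fun a b => hadd ↑a a.2 ↑b b.2
      map_smul' := fun c a => hsmul c ↑a a.2 } with hφLMdef
  set φL : ↥W₁ →L[ℂ] (H₂ →L[ℂ] H₂) :=
    φLM.mkContinuous 1 (fun w => by
      rw [one_mul]
      exact le_of_eq (hnorm ↑w w.2)) with hφLdef
  set eL : ↥W₁ →L[ℂ] ↥Wb :=
    (Submodule.inclusion W₁.le_topologicalClosure).mkContinuous 1 (fun w => by
      rw [one_mul]
      exact le_of_eq rfl) with heLdef
  have heLval : ∀ w : ↥W₁, ((eL w : ↥Wb) : H₁ →L[ℂ] H₁) = ↑w := fun w => rfl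
  have hdense : DenseRange eL := by
    intro w
    have himg : Subtype.val '' Set.range (⇑eL) = (W₁ : Set (H₁ →L[ℂ] H₁)) := by
      ext x
      simp only [Set.mem_image, Set.mem_range]
      constructor
      · rintro ⟨y, ⟨a, rfl⟩, rfl⟩
        rw [heLval]
        exact a.2
      · intro hx
        exact ⟨eL ⟨x, hx⟩, ⟨⟨x, hx⟩, rfl⟩, rfl⟩
    rw [closure_subtype, himg]
    exact hmem' ↑w w.2
  have hui : IsUniformInducing ⇑eL :=
    (AddMonoidHomClass.isometry_of_norm eL (fun w => rfl)).isUniformInducing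
  set ψ : ↥Wb →L[ℂ] (H₂ →L[ℂ] H₂) := φL.extend eL with hψdef
  have hψe : ∀ w : ↥W₁, ψ (eL w) = φL w := fun w =>
    ContinuousLinearMap.extend_eq φL hdense hui w
  set ρ : (H₁ →L[ℂ] H₁) → (H₂ →L[ℂ] H₂) :=
    fun x => if hx : x ∈ Wb then ψ ⟨x, hx⟩ else 0 with hρdef
  have hρψ : ∀ x (hx : x ∈ Wb), ρ x = ψ ⟨x, hx⟩ := by
    intro x hx
    rw [hρdef]
    simp only [dif_pos hx]
  have hρW₁ : ∀ x (hx : x ∈ W₁), ρ x = φ₀ x := by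
    intro x hx
    rw [hρψ x (W₁.le_topologicalClosure hx)]
    have : (⟨x, W₁.le_topologicalClosure hx⟩ : ↥Wb) = eL ⟨x, hx⟩ := rfl
    rw [this, hψe]
    rfl
  have hψmem : ∀ w : ↥Wb, ψ w ∈ closure (W₂ : Set (H₂ →L[ℂ] H₂)) := by
    intro w
    have hsub : Set.range ⇑eL ⊆ ⇑ψ ⁻¹' closure (W₂ : Set (H₂ →L[ℂ] H₂)) := by
      rintro _ ⟨a, rfl⟩
      rw [Set.mem_preimage, hψe]
      exact subset_closure (hmemW₂ ↑a a.2)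
    have hclosed : IsClosed (⇑ψ ⁻¹' closure (W₂ : Set (H₂ →L[ℂ] H₂))) :=
      isClosed_closure.preimage ψ.continuous
    have hw : w ∈ closure (Set.range ⇑eL) := hdense w
    exact closure_minimal hsub hclosed hw
  -- dense subset of Wb consisting of W₁-points
  set setR : Set ↥Wb := {w : ↥Wb | (w : H₁ →L[ℂ] H₁) ∈ W₁} with hsetRdef
  have hsetRrange : setR = Set.range ⇑eL := by
    ext w
    constructor
    · intro hw
      exact ⟨⟨↑w, hw⟩, Subtype.ext rfl⟩
    · rintro ⟨a, rfl⟩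
      exact a.2
  have hsetRdense : Dense setR := by
    rw [hsetRrange]
    exact hdense
  refine ⟨ρ, ?_, ?_, ?_, ?_, ?_, ?_, ?_⟩
  · -- MapsTo
    intro x hx
    rw [hρψ x (hmem x hx)]
    exact hψmem _
  · -- ContinuousOn
    rw [continuousOn_iff_continuous_restrict]
    have hres : (closure (W₁ : Set (H₁ →L[ℂ] H₁))).domRestrict ρ
        = fun w : ↥(closure (W₁ : Set (H₁ →L[ℂ] H₁))) =>
            ψ ⟨(w : H₁ →L[ℂ] H₁), hmem _ w.property⟩ := by
      funext w
      exact hρψ _ (hmem _ w.property)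
    rw [hres]
    exact ψ.continuous.comp (Continuous.subtype_mk continuous_subtype_val _)
  · -- values on S₁
    intro P hP
    rw [hρW₁ P (Submodule.subset_span hP)]
    exact hθeq P hP
  · -- additivity
    intro a ha b hb
    have ha' := hmem a ha
    have hb' := hmem b hb
    have hab' : a + b ∈ Wb := add_mem ha' hb'
    rw [hρψ _ hab', hρψ _ ha', hρψ _ hb']
    have : (⟨a + b, hab'⟩ : ↥Wb) = ⟨a, ha'⟩ + ⟨b, hb'⟩ := rfl
    rw [this, map_add]
  · -- smul
    intro c a ha
    have ha' := hmem a ha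
    have hca' : c • a ∈ Wb := Submodule.smul_mem _ c ha'
    rw [hρψ _ hca', hρψ _ ha']
    have : (⟨c • a, hca'⟩ : ↥Wb) = c • (⟨a, ha'⟩ : ↥Wb) := rfl
    rw [this, map_smul]
  · -- multiplicativity
    have hmulcl : ∀ a ∈ closure (W₁ : Set (H₁ →L[ℂ] H₁)),
        ∀ b ∈ closure (W₁ : Set (H₁ →L[ℂ] H₁)),
        a * b ∈ closure (W₁ : Set (H₁ →L[ℂ] H₁)) := by
      intro a ha b hb
      exact map_mem_closure₂ continuous_mul ha hb
        (fun x hx y hy => (hmulW x hx y hy).1)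
    have hmem2 : ∀ u v : ↥Wb, ((u : H₁ →L[ℂ] H₁) * ↑v) ∈ Wb :=
      fun u v => hmem _ (hmulcl _ (hmem' _ u.2) _ (hmem' _ v.2))
    set f : ↥Wb × ↥Wb → (H₂ →L[ℂ] H₂) :=
      fun z => ψ ⟨↑z.1 * ↑z.2, hmem2 z.1 z.2⟩ with hfdef
    set g : ↥Wb × ↥Wb → (H₂ →L[ℂ] H₂) := fun z => ψ z.1 * ψ z.2 with hgdef
    have hf : Continuous f := by
      refine ψ.continuous.comp (Continuous.subtype_mk ?_ _)
      exact (continuous_subtype_val.comp continuous_fst).mul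
        (continuous_subtype_val.comp continuous_snd)
    have hg : Continuous g :=
      (ψ.continuous.comp continuous_fst).mul (ψ.continuous.comp continuous_snd)
    have heqon : Set.EqOn f g (setR ×ˢ setR) := by
      rintro ⟨u, v⟩ hz
      obtain ⟨hu, hv⟩ := hz
      have huv : ((u : H₁ →L[ℂ] H₁) * ↑v) ∈ W₁ := (hmulW _ hu _ hv).1
      have h1 : (⟨↑u * ↑v, hmem2 u v⟩ : ↥Wb) = eL ⟨↑u * ↑v, huv⟩ := rfl
      have h2 : u = eL ⟨↑u, hu⟩ := Subtype.ext rfl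
      have h3 : v = eL ⟨↑v, hv⟩ := Subtype.ext rfl
      rw [hfdef, hgdef]
      show ψ ⟨↑u * ↑v, hmem2 u v⟩ = ψ u * ψ v
      rw [h1, hψe]
      conv_rhs => rw [h2, h3, hψe, hψe]
      show φ₀ (↑u * ↑v) = φ₀ ↑u * φ₀ ↑v
      exact (hmulW _ hu _ hv).2
    have hfg : f = g :=
      Continuous.ext_on (hsetRdense.prod hsetRdense) hf hg heqon
    intro a ha b hb
    have ha' := hmem a ha
    have hb' := hmem b hb
    have hab' : a * b ∈ Wb := hmem2 ⟨a, ha'⟩ ⟨b, hb'⟩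
    rw [hρψ _ hab', hρψ _ ha', hρψ _ hb']
    have := congrFun hfg (⟨a, ha'⟩, ⟨b, hb'⟩)
    exact this
  · -- star
    have hstarcl : ∀ a ∈ closure (W₁ : Set (H₁ →L[ℂ] H₁)),
        star a ∈ closure (W₁ : Set (H₁ →L[ℂ] H₁)) := by
      intro a ha
      exact map_mem_closure continuous_star ha (fun x hx => (hstarW x hx).1)
    have hmem2 : ∀ u : ↥Wb, star (u : H₁ →L[ℂ] H₁) ∈ Wb :=
      fun u => hmem _ (hstarcl _ (hmem' _ u.2))
    set f : ↥Wb → (H₂ →L[ℂ] H₂) := fun w => ψ ⟨star ↑w, hmem2 w⟩ with hfdef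
    set g : ↥Wb → (H₂ →L[ℂ] H₂) := fun w => star (ψ w) with hgdef
    have hf : Continuous f := by
      refine ψ.continuous.comp (Continuous.subtype_mk ?_ _)
      exact continuous_star.comp continuous_subtype_val
    have hg : Continuous g := continuous_star.comp ψ.continuous
    have heqon : Set.EqOn f g setR := by
      intro u hu
      have hsu : star (u : H₁ →L[ℂ] H₁) ∈ W₁ := (hstarW _ hu).1
      have h1 : (⟨star ↑u, hmem2 u⟩ : ↥Wb) = eL ⟨star ↑u, hsu⟩ := rfl
      have h2 : u = eL ⟨↑u, hu⟩ := Subtype.ext rfl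
      rw [hfdef, hgdef]
      show ψ ⟨star ↑u, hmem2 u⟩ = star (ψ u)
      rw [h1, hψe]
      conv_rhs => rw [h2, hψe]
      show φ₀ (star ↑u) = star (φ₀ ↑u)
      exact (hstarW _ hu).2
    have hfg : f = g := Continuous.ext_on hsetRdense hf hg heqon
    intro a ha
    have ha' := hmem a ha
    have hsa' : star a ∈ Wb := hmem2 ⟨a, ha'⟩
    rw [hρψ _ hsa', hρψ _ ha']
    exact congrFun hfg ⟨a, ha'⟩

end GoodLat
end Construct

section Final
variable {H₁ : Type*} [NormedAddCommGroup H₁] [InnerProductSpace ℂ H₁] [CompleteSpace H₁]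
variable {H₂ : Type*} [NormedAddCommGroup H₂] [InnerProductSpace ℂ H₂] [CompleteSpace H₂]


namespace GoodLat

variable {S₁ : Set (H₁ →L[ℂ] H₁)} {S₂ : Set (H₂ →L[ℂ] H₂)}
  {θ : (H₁ →L[ℂ] H₁) → (H₂ →L[ℂ] H₂)}

lemma symm (h : GoodLat S₁ S₂ θ) {τ : (H₂ →L[ℂ] H₂) → (H₁ →L[ℂ] H₁)}
    (hinv : Set.InvOn τ θ S₁ S₂) : GoodLat S₂ S₁ τ := by
  have bijτ : Set.BijOn τ S₂ S₁ := h.bij.symm hinv.symm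
  exact
    { proj₁ := h.proj₂
      proj₂ := h.proj₁
      comm₁ := h.comm₂
      comm₂ := h.comm₁
      zero₁ := h.zero₂
      one₁ := h.one₂
      zero₂ := h.zero₁
      one₂ := h.one₁
      lat₁ := h.lat₂
      lat₂ := h.lat₁
      bij := bijτ
      mono := by
        intro P hP Q hQ
        have h1 := h.mono (τ P) (bijτ.1 hP) (τ Q) (bijτ.1 hQ)
        rw [hinv.2 hP, hinv.2 hQ] at h1
        exact h1.symm }

end GoodLat

lemma comp_id_on {ρ : (H₁ →L[ℂ] H₁) → (H₂ →L[ℂ] H₂)}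
    {ρ' : (H₂ →L[ℂ] H₂) → (H₁ →L[ℂ] H₁)}
    {S₁ : Set (H₁ →L[ℂ] H₁)} {S₂ : Set (H₂ →L[ℂ] H₂)}
    (hmapsρ : Set.MapsTo ρ
      (closure ((Submodule.span ℂ S₁ : Submodule ℂ (H₁ →L[ℂ] H₁)) : Set (H₁ →L[ℂ] H₁)))
      (closure ((Submodule.span ℂ S₂ : Submodule ℂ (H₂ →L[ℂ] H₂)) : Set (H₂ →L[ℂ] H₂))))
    (hcontρ : ContinuousOn ρ
      (closure ((Submodule.span ℂ S₁ : Submodule ℂ (H₁ →L[ℂ] H₁)) : Set (H₁ →L[ℂ] H₁))))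
    (hcontρ' : ContinuousOn ρ'
      (closure ((Submodule.span ℂ S₂ : Submodule ℂ (H₂ →L[ℂ] H₂)) : Set (H₂ →L[ℂ] H₂))))
    (haddρ : ∀ a ∈ closure ((Submodule.span ℂ S₁ : Submodule ℂ (H₁ →L[ℂ] H₁)) : Set (H₁ →L[ℂ] H₁)),
      ∀ b ∈ closure ((Submodule.span ℂ S₁ : Submodule ℂ (H₁ →L[ℂ] H₁)) : Set (H₁ →L[ℂ] H₁)),
      ρ (a + b) = ρ a + ρ b)
    (hsmulρ : ∀ (c : ℂ),
      ∀ a ∈ closure ((Submodule.span ℂ S₁ : Submodule ℂ (H₁ →L[ℂ] H₁)) : Set (H₁ →L[ℂ] H₁)),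
      ρ (c • a) = c • ρ a)
    (haddρ' : ∀ a ∈ closure ((Submodule.span ℂ S₂ : Submodule ℂ (H₂ →L[ℂ] H₂)) : Set (H₂ →L[ℂ] H₂)),
      ∀ b ∈ closure ((Submodule.span ℂ S₂ : Submodule ℂ (H₂ →L[ℂ] H₂)) : Set (H₂ →L[ℂ] H₂)),
      ρ' (a + b) = ρ' a + ρ' b)
    (hsmulρ' : ∀ (c : ℂ),
      ∀ a ∈ closure ((Submodule.span ℂ S₂ : Submodule ℂ (H₂ →L[ℂ] H₂)) : Set (H₂ →L[ℂ] H₂)),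
      ρ' (c • a) = c • ρ' a)
    (hbase : ∀ P ∈ S₁, ρ' (ρ P) = P) :
    ∀ x ∈ closure ((Submodule.span ℂ S₁ : Submodule ℂ (H₁ →L[ℂ] H₁)) : Set (H₁ →L[ℂ] H₁)),
      ρ' (ρ x) = x := by
  classical
  set W₁ : Submodule ℂ (H₁ →L[ℂ] H₁) := Submodule.span ℂ S₁ with hW₁def
  set W₂ : Submodule ℂ (H₂ →L[ℂ] H₂) := Submodule.span ℂ S₂ with hW₂def
  have hρ0 : ρ 0 = 0 := by
    have h0c : (0 : H₁ →L[ℂ] H₁) ∈ closure (W₁ : Set (H₁ →L[ℂ] H₁)) :=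
      subset_closure (zero_mem _)
    have := hsmulρ 0 0 h0c
    rw [zero_smul, zero_smul] at this
    exact this
  have hρ'0 : ρ' 0 = 0 := by
    have h0c : (0 : H₂ →L[ℂ] H₂) ∈ closure (W₂ : Set (H₂ →L[ℂ] H₂)) :=
      subset_closure (zero_mem _)
    have := hsmulρ' 0 0 h0c
    rw [zero_smul, zero_smul] at this
    exact this
  have hW : ∀ x ∈ W₁, ρ' (ρ x) = x := by
    intro x hx
    refine Submodule.span_induction ?_ ?_ ?_ ?_ hx
    · exact hbase
    · rw [hρ0, hρ'0]
    · intro a b haW hbW iha ihb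
      have hac : a ∈ closure (W₁ : Set (H₁ →L[ℂ] H₁)) := subset_closure haW
      have hbc : b ∈ closure (W₁ : Set (H₁ →L[ℂ] H₁)) := subset_closure hbW
      rw [haddρ a hac b hbc, haddρ' _ (hmapsρ hac) _ (hmapsρ hbc), iha, ihb]
    · intro c a haW iha
      have hac : a ∈ closure (W₁ : Set (H₁ →L[ℂ] H₁)) := subset_closure haW
      rw [hsmulρ c a hac, hsmulρ' c _ (hmapsρ hac), iha]
  -- extend to the closure by continuity
  set f : ↥(closure (W₁ : Set (H₁ →L[ℂ] H₁))) → (H₁ →L[ℂ] H₁) :=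
    fun w => ρ' (ρ ↑w) with hfdef
  set g : ↥(closure (W₁ : Set (H₁ →L[ℂ] H₁))) → (H₁ →L[ℂ] H₁) :=
    fun w => ↑w with hgdef
  have hfc : Continuous f := by
    have hco : ContinuousOn (ρ' ∘ ρ) (closure (W₁ : Set (H₁ →L[ℂ] H₁))) :=
      ContinuousOn.comp hcontρ' hcontρ hmapsρ
    exact continuousOn_iff_continuous_restrict.mp hco
  have hgc : Continuous g := continuous_subtype_val
  set s : Set ↥(closure (W₁ : Set (H₁ →L[ℂ] H₁))) :=
    {w | (w : H₁ →L[ℂ] H₁) ∈ W₁} with hsdef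
  have hsd : Dense s := by
    intro w
    rw [closure_subtype]
    have himg : Subtype.val '' s = (W₁ : Set (H₁ →L[ℂ] H₁)) := by
      ext x
      simp only [Set.mem_image]
      constructor
      · rintro ⟨y, hy, rfl⟩; exact hy
      · intro hx; exact ⟨⟨x, subset_closure hx⟩, hx, rfl⟩
    rw [himg]
    exact w.2
  have hfg : f = g := Continuous.ext_on hsd hfc hgc (fun w hw => hW ↑w hw)
  intro x hx
  exact congrFun hfg ⟨x, hx⟩

theorem starIsomAux {S₁ : Set (H₁ →L[ℂ] H₁)} {S₂ : Set (H₂ →L[ℂ] H₂)}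
    (hproj₁ : ∀ P ∈ S₁, IsProjOp P) (hproj₂ : ∀ P ∈ S₂, IsProjOp P)
    (hcomm₁ : ∀ P ∈ S₁, ∀ Q ∈ S₁, P * Q = Q * P)
    (hcomm₂ : ∀ P ∈ S₂, ∀ Q ∈ S₂, P * Q = Q * P)
    (h0₁ : (0 : H₁ →L[ℂ] H₁) ∈ S₁) (h1₁ : (1 : H₁ →L[ℂ] H₁) ∈ S₁)
    (h0₂ : (0 : H₂ →L[ℂ] H₂) ∈ S₂) (h1₂ : (1 : H₂ →L[ℂ] H₂) ∈ S₂)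
    (hlat₁ : ∀ P ∈ S₁, ∀ Q ∈ S₁, P * Q ∈ S₁ ∧ P + Q - P * Q ∈ S₁)
    (hlat₂ : ∀ P ∈ S₂, ∀ Q ∈ S₂, P * Q ∈ S₂ ∧ P + Q - P * Q ∈ S₂)
    (θ : (H₁ →L[ℂ] H₁) → (H₂ →L[ℂ] H₂))
    (hbij : Set.BijOn θ S₁ S₂)
    (hmono : ∀ P ∈ S₁, ∀ Q ∈ S₁, (projLE P Q ↔ projLE (θ P) (θ Q))) :
    ∃ ρ : (H₁ →L[ℂ] H₁) → (H₂ →L[ℂ] H₂),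
      IsStarIsomOn ρ
        (closure ((Submodule.span ℂ S₁ : Submodule ℂ (H₁ →L[ℂ] H₁)) : Set (H₁ →L[ℂ] H₁)))
        (closure ((Submodule.span ℂ S₂ : Submodule ℂ (H₂ →L[ℂ] H₂)) : Set (H₂ →L[ℂ] H₂))) ∧
      ∀ P ∈ S₁, ρ P = θ P := by
  classical
  have hg : GoodLat S₁ S₂ θ :=
    ⟨hproj₁, hproj₂, hcomm₁, hcomm₂, h0₁, h1₁, h0₂, h1₂, hlat₁, hlat₂, hbij, hmono⟩
  set τ : (H₂ →L[ℂ] H₂) → (H₁ →L[ℂ] H₁) := Function.invFunOn θ S₁ with hτdef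
  have hinv : Set.InvOn τ θ S₁ S₂ := hbij.invOn_invFunOn
  have hg' : GoodLat S₂ S₁ τ := hg.symm hinv
  obtain ⟨ρ, hmaps, hcont, hS, haddρ, hsmulρ, hmulρ, hstarρ⟩ := hg.exists_rho
  obtain ⟨ρ', hmaps', hcont', hS', hadd', hsmul', _, _⟩ := hg'.exists_rho
  have hbase : ∀ P ∈ S₁, ρ' (ρ P) = P := by
    intro P hP
    rw [hS P hP, hS' (θ P) (hg.mem₂ hP)]
    exact hinv.1 hP
  have hbase' : ∀ Q ∈ S₂, ρ (ρ' Q) = Q := by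
    intro Q hQ
    rw [hS' Q hQ, hS (τ Q) (hg'.mem₂ hQ)]
    exact hinv.2 hQ
  have hid₁ : ∀ x ∈ closure ((Submodule.span ℂ S₁ : Submodule ℂ (H₁ →L[ℂ] H₁)) :
      Set (H₁ →L[ℂ] H₁)), ρ' (ρ x) = x :=
    comp_id_on hmaps hcont hcont' haddρ hsmulρ hadd' hsmul' hbase
  have hid₂ : ∀ y ∈ closure ((Submodule.span ℂ S₂ : Submodule ℂ (H₂ →L[ℂ] H₂)) :
      Set (H₂ →L[ℂ] H₂)), ρ (ρ' y) = y :=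
    comp_id_on hmaps' hcont' hcont hadd' hsmul' haddρ hsmulρ hbase'
  refine ⟨ρ, ⟨⟨hmaps, ?_, ?_⟩, haddρ, hsmulρ, hmulρ, hstarρ⟩, hS⟩
  · -- InjOn
    intro x hx y hy hxy
    have h1 := hid₁ x hx
    have h2 := hid₁ y hy
    rw [← h1, ← h2, hxy]
  · -- SurjOn
    intro y hy
    exact ⟨ρ' y, hmaps' hy, hid₂ y hy⟩

end Final

/-- **Lemma 5.2.** A lattice isomorphism `θ : S₁ → S₂` between commutative projection lattices
(containing `0` and `1`, closed under pairwise `∧` and `∨`) extends to a * isomorphism between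
the norm-closed linear spans `span(S₁)^{-‖·‖}` and `span(S₂)^{-‖·‖}`. -/
theorem stmt15 {H₁ : Type*} {H₂ : Type*}
    [NormedAddCommGroup H₁] [InnerProductSpace ℂ H₁] [CompleteSpace H₁]
    [TopologicalSpace.SeparableSpace H₁]
    [NormedAddCommGroup H₂] [InnerProductSpace ℂ H₂] [CompleteSpace H₂]
    [TopologicalSpace.SeparableSpace H₂]
    (S₁ : Set (H₁ →L[ℂ] H₁)) (S₂ : Set (H₂ →L[ℂ] H₂))
    (hproj₁ : ∀ P ∈ S₁, IsProjOp P) (hproj₂ : ∀ P ∈ S₂, IsProjOp P)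
    (hcomm₁ : ∀ P ∈ S₁, ∀ Q ∈ S₁, P * Q = Q * P)
    (hcomm₂ : ∀ P ∈ S₂, ∀ Q ∈ S₂, P * Q = Q * P)
    (h0₁ : (0 : H₁ →L[ℂ] H₁) ∈ S₁) (h1₁ : (1 : H₁ →L[ℂ] H₁) ∈ S₁)
    (h0₂ : (0 : H₂ →L[ℂ] H₂) ∈ S₂) (h1₂ : (1 : H₂ →L[ℂ] H₂) ∈ S₂)
    (hlat₁ : ∀ P ∈ S₁, ∀ Q ∈ S₁, P * Q ∈ S₁ ∧ P + Q - P * Q ∈ S₁)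
    (hlat₂ : ∀ P ∈ S₂, ∀ Q ∈ S₂, P * Q ∈ S₂ ∧ P + Q - P * Q ∈ S₂)
    (θ : (H₁ →L[ℂ] H₁) → (H₂ →L[ℂ] H₂)) (hθ : IsLatticeIsomOn θ S₁ S₂) :
    ∃ ρ : (H₁ →L[ℂ] H₁) → (H₂ →L[ℂ] H₂),
      IsStarIsomOn ρ
        (closure ((Submodule.span ℂ S₁ : Submodule ℂ (H₁ →L[ℂ] H₁)) : Set (H₁ →L[ℂ] H₁)))
        (closure ((Submodule.span ℂ S₂ : Submodule ℂ (H₂ →L[ℂ] H₂)) : Set (H₂ →L[ℂ] H₂))) ∧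
      ∀ P ∈ S₁, ρ P = θ P := by
  obtain ⟨ρ, hiso, hval⟩ := starIsomAux hproj₁ hproj₂ hcomm₁ hcomm₂ h0₁ h1₁ h0₂ h1₂
    hlat₁ hlat₂ θ hθ.1 hθ.2
  exact ⟨ρ, hiso, hval⟩
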